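/- Let G be a connected trivalent graph, with to each marking M (an assignment of a sign ± to every vertex) associated a closed oriented surface S_M of genus g(M) obtained by thickening. Then W_{gl(N)}(G) = Σ_M sign(M) · N^{v/2 + 2 − 2g(M)}, where sign(M) is the product of the signs of M and v is the number of vertices. In particular W_{gl(N)}(G) is a polynomial in N of degree at most v/2 + 2. -/

import Mathlib

/-!
Expanding every structure constant of `gl(N)` into its two cyclic terms writes `W` as a signed
sum over markings `m`. For a fixed marking the Kronecker deltas force a labelling to be
`d ↦ (x d, x (rot m d))` for some `x` constant along the cycles of the boundary permutation
`rot m * σ`, so the contraction counts `N ^ b(m)`.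

The bound on `b(m)` is Euler's inequality `c(α) + c(β) + c(α * β) ≤ n + 2` for a transitive
pair of permutations of `n` points, where `c` counts cycles. Write `(α * β)⁻¹`, `α` and `β` as
products of `n - c` transpositions each, `3n - c(α) - c(β) - c(α * β)` in all, whose product is
the identity. Multiplying by a transposition changes `c` by one, and lowers it only when the
transposition joins two cycles, hence two components of the graph traced by the transpositions
so far. Since that graph ends up connected, `n + n ≤ (3n - c(α) - c(β) - c(α * β)) + 2`.
For the thickening, `c(rot m) ≥ v` and `c(σ) ≥ 3v / 2`, whence `b(m) ≤ v / 2 + 2`.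
-/

/-- A finite oriented trivalent graph on vertex set `V`: the darts (half-edges)
are `V × Fin 3` (three darts per vertex, in cyclic order), matched into edges by
a fixed-point-free involution. -/
structure TrivGraph (V : Type*) where
  σ : Equiv.Perm (V × Fin 3)
  invol : ∀ d, σ (σ d) = d
  nofix : ∀ d, σ d ≠ d

/-- The full contraction `W` of structure constants `f` and inverse metric
tensors `t` along a trivalent graph. -/
noncomputable def W {V ι K : Type*} [Fintype V] [DecidableEq V] [Fintype ι]
    [CommRing K] (G : TrivGraph V) (O : Finset (V × Fin 3))
    (f : ι → ι → ι → K) (t : ι → ι → K) : K :=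
  ∑ ℓ : V × Fin 3 → ι,
    (∏ v : V, f (ℓ (v, 0)) (ℓ (v, 1)) (ℓ (v, 2))) * ∏ d ∈ O, t (ℓ d) (ℓ (G.σ d))

/-- The structure constants of `gl(N)` in the basis of elementary matrices:
`f_{(ij)(kl)(mn)} = δ_{jk}δ_{lm}δ_{ni} − δ_{nk}δ_{li}δ_{jm}`. -/
def fgl (N : ℕ) (p q r : Fin N × Fin N) : ℝ :=
  (if p.2 = q.1 then (1 : ℝ) else 0) * (if q.2 = r.1 then 1 else 0) *
      (if r.2 = p.1 then 1 else 0) -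
    (if r.2 = q.1 then (1 : ℝ) else 0) * (if q.2 = p.1 then 1 else 0) *
      (if p.2 = r.1 then 1 else 0)

/-- The inverse metric of `gl(N)` for the trace form: `t^{(ij)(kl)} = δ_{jk}δ_{il}`. -/
def tgl (N : ℕ) (p q : Fin N × Fin N) : ℝ :=
  (if p.2 = q.1 then (1 : ℝ) else 0) * (if p.1 = q.2 then 1 else 0)

/-- Local rotation of the darts at each vertex: counterclockwise at vertices
marked `+` (`true`) and clockwise at vertices marked `−` (`false`). -/
def rot {V : Type*} (m : V → Bool) : Equiv.Perm (V × Fin 3) where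
  toFun d := (d.1, d.2 + if m d.1 then 1 else 2)
  invFun d := (d.1, d.2 - if m d.1 then 1 else 2)
  left_inv d := by cases d; simp
  right_inv d := by cases d; simp

/-- The setoid on darts whose classes are the cycles of a permutation. -/
def cycleSetoid {D : Type*} (β : Equiv.Perm D) : Setoid D :=
  ⟨β.SameCycle, ⟨fun x => Equiv.Perm.SameCycle.refl β x, fun h => h.symm,
    fun h h' => h.trans h'⟩⟩

/-- The number of boundary components of the thickening `T_M` of `G` determined
by a marking `m`: the number of cycles of the boundary permutation (edge
involution followed by the local rotations). -/
noncomputable def boundaryComponents {V : Type*} (G : TrivGraph V)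
    (m : V → Bool) : ℕ :=
  Nat.card (Quotient (cycleSetoid (G.σ.trans (rot m))))

open Equiv Equiv.Perm Function

namespace Equiv.Perm

variable {D : Type*}

theorem SameCycle.eq_of_invariant {β : Type*} {π : Perm D} {φ : D → β}
    (hφ : ∀ x, φ (π x) = φ x) {x y : D} (h : π.SameCycle x y) : φ x = φ y := by
  suffices ∀ (k : ℤ) x, φ ((π ^ k) x) = φ x from h.elim fun k hk => hk ▸ (this k x).symm
  intro k
  induction k using Int.induction_on with
  | zero => simp
  | succ k ih => intro x; rw [zpow_add_one, mul_apply, ih, hφ]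
  | pred k ih =>
    intro x
    rw [← hφ, ← mul_apply, ← zpow_one_add, show (1 : ℤ) + (-k - 1) = -k by ring, ih]

theorem SameCycle.eq_of_invariant_swap_mul [DecidableEq D] {β : Type*} {π : Perm D}
    {φ : D → β} {a b x y : D} (hφ : ∀ z, φ (π z) = φ z) (hab : φ a = φ b)
    (h : (swap a b * π).SameCycle x y) : φ x = φ y :=
  h.eq_of_invariant fun z => (apply_swap_eq_self hab (π z)).trans (hφ z)

theorem sameCycle_swap_mul_of_not_sameCycle [DecidableEq D] [Finite D] {π : Perm D} {a b : D}
    (h : ¬π.SameCycle a b) : (swap a b * π).SameCycle a b := by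
  -- `swap a b * π` agrees with `π` along the `π`-orbit of `a` until `π⁻¹ a`, which it sends to `b`.
  have key : ∀ (n : ℕ) (x : D), (π ^ n) x = π⁻¹ a → ¬π.SameCycle x b →
      (swap a b * π).SameCycle x b := by
    intro n
    induction n with
    | zero =>
      rintro x rfl -
      exact ⟨1, by simp⟩
    | succ n ih =>
      intro x hx hxb
      by_cases hxa : π x = a
      · exact ⟨1, by simp [hxa]⟩
      have hπx : (swap a b * π) x = π x :=
        swap_apply_of_ne_of_ne hxa fun hb => hxb ⟨1, by simpa using hb⟩
      have := ih (π x) (by rwa [pow_succ, mul_apply] at hx) (by rwa [sameCycle_apply_left])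
      rwa [← hπx, sameCycle_apply_left] at this
  obtain ⟨n, -, hn⟩ := (show π.SameCycle a (π⁻¹ a) from ⟨-1, by simp⟩).exists_pow_eq'
  exact key n a hn h

end Equiv.Perm

section Quot

variable {D : Type*}

theorem card_quot_of_forall_rel_eq {r : D → D → Prop} (h : ∀ x y, r x y → x = y) :
    Nat.card (Quot r) = Nat.card D :=
  (Nat.card_congr (Equiv.ofBijective (Quot.mk r)
    ⟨fun _ _ hxy => congrArg (Quot.lift id h) hxy, Quot.mk_surjective⟩)).symm

theorem card_quot_le_of_forall_rel [Finite D] {r r' : D → D → Prop}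
    (h : ∀ x y, r' x y → Quot.mk r x = Quot.mk r y) : Nat.card (Quot r) ≤ Nat.card (Quot r') :=
  Nat.card_le_card_of_surjective _ <| (Quot.surjective_lift h).2 Quot.mk_surjective

/-- The hypothesis says that `r'` lies in the equivalence relation generated by `r` and `(a, b)`. -/
theorem card_quot_le_card_quot_add_one [Finite D] {r r' : D → D → Prop} (a b : D)
    (h : ∀ φ : D → Quot r, (∀ x y, r x y → φ x = φ y) → φ a = φ b →
      ∀ x y, r' x y → φ x = φ y) :
    Nat.card (Quot r) ≤ Nat.card (Quot r') + 1 := by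
  classical
  let φ : D → Quot r := fun z => if Quot.mk r z = Quot.mk r b then Quot.mk r a else Quot.mk r z
  have hφ : ∀ x y, r' x y → φ x = φ y :=
    h φ (fun x y hxy => by simp only [φ, Quot.sound hxy]) (by simp [φ])
  let F : Option (Quot r') → Quot r := fun o => o.elim (Quot.mk r b) (Quot.lift φ hφ)
  have hF : Surjective F := by
    rintro ⟨z⟩
    by_cases hz : Quot.mk r z = Quot.mk r b
    · exact ⟨none, hz.symm⟩
    · exact ⟨some (Quot.mk r' z), if_neg hz⟩
  simpa using Nat.card_le_card_of_surjective F hF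

theorem card_quot_add_one_le_of_merge [Finite D] {r r' : D → D → Prop} {a b : D}
    (h : ∀ x y, r x y → Quot.mk r' x = Quot.mk r' y) (hab : Quot.mk r' a = Quot.mk r' b)
    (hne : Quot.mk r a ≠ Quot.mk r b) : Nat.card (Quot r') + 1 ≤ Nat.card (Quot r) := by
  have := Fintype.ofFinite (Quot r)
  have := Fintype.ofFinite (Quot r')
  simp only [Nat.card_eq_fintype_card, Nat.succ_le_iff]
  exact Fintype.card_lt_of_surjective_not_injective (Quot.lift (Quot.mk r') h)
    ((Quot.surjective_lift h).2 Quot.mk_surjective) fun hinj => hne (hinj hab)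

end Quot

namespace Equiv.Perm

variable {D : Type*}

/-- Unlike `Equiv.Perm.cycleType`, this counts fixed points as cycles. -/
noncomputable def numCycles (π : Perm D) : ℕ := Nat.card (Quot π.SameCycle)

theorem numCycles_one [Finite D] : numCycles (1 : Perm D) = Nat.card D :=
  card_quot_of_forall_rel_eq fun _ _ => sameCycle_one.1

theorem numCycles_inv (π : Perm D) : numCycles π⁻¹ = numCycles π := by
  rw [numCycles, show π⁻¹.SameCycle = π.SameCycle from funext₂ fun _ _ => propext sameCycle_inv,
    numCycles]

theorem card_le_numCycles_of_invariant [Finite D] {β : Type*} {π : Perm D} {φ : D → β}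
    (hφ : Surjective φ) (hinv : ∀ x, φ (π x) = φ x) : Nat.card β ≤ numCycles π :=
  Nat.card_le_card_of_surjective _ ((Quot.surjective_lift fun _ _ h => h.eq_of_invariant hinv).2 hφ)

theorem card_le_two_mul_numCycles [Finite D] {σ : Perm D} (hσ : Involutive σ) :
    Nat.card D ≤ 2 * numCycles σ := by
  have hcyc : ∀ {x y}, σ.SameCycle x y → y = x ∨ y = σ x := fun {x y} h => by
    have hpair : ({x, σ x} : Set D) = {y, σ y} :=
      h.eq_of_invariant (φ := fun z => ({z, σ z} : Set D)) fun z => by rw [hσ z, Set.pair_comm]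
    have hy : y ∈ ({x, σ x} : Set D) := hpair ▸ Set.mem_insert y {σ y}
    simpa using hy
  have hmk : ∀ {x y}, Quot.mk σ.SameCycle x = Quot.mk σ.SameCycle y → σ.SameCycle x y :=
    fun h => (SameCycle.equivalence σ).eqvGen_iff.1 (Quot.eqvGen_exact h)
  classical
  -- A cycle has at most two points: record whether the point is the chosen representative.
  let f : D → Quot σ.SameCycle × Bool := fun d =>
    (Quot.mk _ d, decide (d = (Quot.mk σ.SameCycle d).out))
  have hf : Injective f := by
    intro x y hxy
    simp only [f, Prod.mk.injEq] at hxy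
    obtain ⟨hq, hout⟩ := hxy
    rw [← hq] at hout
    have hrep := hcyc (hmk (Quot.out_eq (Quot.mk σ.SameCycle x))).symm
    rcases hcyc (hmk hq) with rfl | rfl
    · rfl
    · rcases hrep with h | h <;> rw [h] at hout
      · exact (of_decide_eq_true (hout.symm.trans (decide_eq_true rfl))).symm
      · exact of_decide_eq_true (hout.trans (decide_eq_true rfl))
  calc Nat.card D ≤ Nat.card (Quot σ.SameCycle × Bool) := Nat.card_le_card_of_injective f hf
    _ = 2 * numCycles σ := by simp [numCycles, mul_comm]

theorem card_invariant_fun_eq_pow_numCycles [Finite D] {α : Type*} [Finite α] (π : Perm D) :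
    Nat.card {x : D → α // ∀ d, x (π d) = x d} = Nat.card α ^ numCycles π := by
  rw [numCycles, ← Nat.card_fun]
  exact Nat.card_congr
    { toFun := fun x => Quot.lift x.1 fun _ _ h => h.eq_of_invariant x.2
      invFun := fun y =>
        ⟨fun d => y (Quot.mk _ d), fun _ => congrArg y (Quot.sound SameCycle.rfl.apply_left)⟩
      left_inv := fun _ => rfl
      right_inv := fun y => funext <| Quot.ind fun _ => rfl }

theorem numCycles_swap_mul_le [DecidableEq D] [Finite D] (π : Perm D) (a b : D) :
    numCycles (swap a b * π) ≤ numCycles π + 1 :=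
  card_quot_le_card_quot_add_one a b fun _ hφ hab _ _ hxy =>
    (swap_mul_self_mul a b π ▸ hxy).eq_of_invariant_swap_mul
      (fun _ => (hφ _ _ SameCycle.rfl.apply_right).symm) hab

theorem numCycles_swap_mul_add_one_le [DecidableEq D] [Finite D] {π : Perm D} {a b : D}
    (h : ¬π.SameCycle a b) : numCycles (swap a b * π) + 1 ≤ numCycles π := by
  have hjoin := sameCycle_swap_mul_of_not_sameCycle h
  refine card_quot_add_one_le_of_merge (fun x y hxy => ?_) (Quot.sound hjoin)
    fun hab => h ((SameCycle.equivalence π).eqvGen_iff.1 (Quot.eqvGen_exact hab))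
  exact (swap_mul_self_mul a b π ▸ hxy).eq_of_invariant_swap_mul
    (fun _ => (Quot.sound SameCycle.rfl.apply_right).symm) (Quot.sound hjoin)

theorem numCycles_add_one_le_swap_mul [DecidableEq D] [Finite D] {π : Perm D} {a : D}
    (ha : π a ≠ a) : numCycles π + 1 ≤ numCycles (swap a (π a) * π) := by
  have hfix : (swap a (π a) * π) a = a := by simp
  have := numCycles_swap_mul_add_one_le (π := swap a (π a) * π)
    fun h => ha (h.eq_of_left hfix).symm
  rwa [swap_mul_self_mul] at this

def swapProd [DecidableEq D] (l : List (D × D)) : Perm D :=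
  (l.map fun p => swap p.1 p.2).prod

theorem swapProd_cons [DecidableEq D] (p : D × D) (l : List (D × D)) :
    swapProd (p :: l) = swap p.1 p.2 * swapProd l := rfl

theorem swapProd_append [DecidableEq D] (l₁ l₂ : List (D × D)) :
    swapProd (l₁ ++ l₂) = swapProd l₁ * swapProd l₂ := by
  simp [swapProd]

theorem exists_swapProd_eq [DecidableEq D] [Fintype D] (π : Perm D) :
    ∃ l : List (D × D), swapProd l = π ∧ l.length + numCycles π ≤ Nat.card D := by
  induction h : π.support.card using Nat.strong_induction_on generalizing π with
  | _ n ih =>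
  by_cases hπ : π = 1
  · exact ⟨[], by simp [hπ, swapProd], by simp [hπ, numCycles_one]⟩
  obtain ⟨a, ha⟩ : ∃ a, π a ≠ a := not_forall.1 fun h => hπ (Equiv.ext h)
  obtain ⟨l, hl, hlen⟩ := ih _ (h ▸ card_support_swap_mul ha) (swap a (π a) * π) rfl
  refine ⟨(a, π a) :: l, by rw [swapProd_cons, hl, swap_mul_self_mul], ?_⟩
  have := numCycles_add_one_le_swap_mul ha
  simp only [List.length_cons]
  omega

def edgeRel (l : List (D × D)) (x y : D) : Prop := (x, y) ∈ l

theorem apply_swapProd_eq_self [DecidableEq D] {β : Type*} {φ : D → β} {l : List (D × D)}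
    (h : ∀ p ∈ l, φ p.1 = φ p.2) (x : D) : φ (swapProd l x) = φ x := by
  induction l with
  | nil => rfl
  | cons p l ih =>
    rw [swapProd_cons, mul_apply, apply_swap_eq_self (h p List.mem_cons_self),
      ih fun q hq => h q (List.mem_cons_of_mem p hq)]

theorem SameCycle.quot_mk_edgeRel_eq [DecidableEq D] {l l' : List (D × D)} (hl : l ⊆ l')
    {x y : D} (h : (swapProd l).SameCycle x y) :
    Quot.mk (edgeRel l') x = Quot.mk (edgeRel l') y :=
  h.eq_of_invariant <| apply_swapProd_eq_self fun _ hp => Quot.sound (hl hp)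

theorem numCycles_swapProd_add_card_le [DecidableEq D] [Finite D] (l : List (D × D)) :
    numCycles (swapProd l) + Nat.card D ≤ l.length + 2 * Nat.card (Quot (edgeRel l)) := by
  induction l with
  | nil =>
    rw [show swapProd ([] : List (D × D)) = 1 from rfl, numCycles_one,
      card_quot_of_forall_rel_eq (r := edgeRel []) fun _ _ h => absurd h List.not_mem_nil]
    omega
  | cons p l ih =>
    have hcomp : Nat.card (Quot (edgeRel l)) ≤ Nat.card (Quot (edgeRel (p :: l))) + 1 :=
      card_quot_le_card_quot_add_one p.1 p.2 fun φ hφ hab x y hxy => by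
        obtain rfl | h := List.mem_cons.1 hxy
        exacts [hab, hφ x y h]
    rw [swapProd_cons, List.length_cons]
    by_cases hp : Quot.mk (edgeRel l) p.1 = Quot.mk (edgeRel l) p.2
    · have hcomp' : Nat.card (Quot (edgeRel l)) ≤ Nat.card (Quot (edgeRel (p :: l))) :=
        card_quot_le_of_forall_rel fun x y hxy => by
          obtain rfl | h := List.mem_cons.1 hxy
          exacts [hp, Quot.sound h]
      have := numCycles_swap_mul_le (swapProd l) p.1 p.2
      omega
    · have := numCycles_swap_mul_add_one_le fun h =>
        hp (h.quot_mk_edgeRel_eq (List.Subset.refl l))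
      omega

/-- Euler's inequality `V - E + F ≤ 2` for the map encoded by a transitive pair of permutations. -/
theorem numCycles_add_numCycles_add_numCycles_mul_le [DecidableEq D] [Fintype D] (α β : Perm D)
    (hconn : ∀ x y, Relation.ReflTransGen (fun u w => α.SameCycle u w ∨ β.SameCycle u w) x y) :
    numCycles α + numCycles β + numCycles (α * β) ≤ Nat.card D + 2 := by
  obtain ⟨lγ, hγ, hlenγ⟩ := exists_swapProd_eq (α * β)⁻¹
  obtain ⟨lα, hα, hlenα⟩ := exists_swapProd_eq α
  obtain ⟨lβ, hβ, hlenβ⟩ := exists_swapProd_eq β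
  set l := lγ ++ lα ++ lβ
  have hl : swapProd l = 1 := by
    simp only [l, swapProd_append, hγ, hα, hβ, mul_assoc, inv_mul_cancel]
  have hconn' : ∀ x y, Quot.mk (edgeRel l) x = Quot.mk (edgeRel l) y := fun x y => by
    induction hconn x y with
    | refl => rfl
    | tail _ h ih =>
      refine ih.trans ?_
      rcases h with h | h
      · exact (hα ▸ h).quot_mk_edgeRel_eq fun _ hp => by simp [l, hp]
      · exact (hβ ▸ h).quot_mk_edgeRel_eq fun _ hp => by simp [l, hp]
  have hcomp : Nat.card (Quot (edgeRel l)) ≤ 1 :=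
    Finite.card_le_one_iff_subsingleton.2 ⟨by rintro ⟨x⟩ ⟨y⟩; exact hconn' x y⟩
  have hEuler := numCycles_swapProd_add_card_le l
  rw [hl, numCycles_one] at hEuler
  rw [numCycles_inv] at hlenγ
  have hlen : l.length = lγ.length + lα.length + lβ.length := by
    simp only [l, List.length_append]
  omega

end Equiv.Perm

theorem sum_prod_ite_eq_pow_numCycles {D α R : Type*} [Fintype D] [DecidableEq D] [Fintype α]
    [DecidableEq α] [CommSemiring R] (ρ σ : Perm D) :
    ∑ ℓ : D → α × α, (∏ d, if (ℓ d).2 = (ℓ (ρ d)).1 then (1 : R) else 0) *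
      ∏ d, (if (ℓ d).2 = (ℓ (σ d)).1 then 1 else 0) =
      (Nat.card α : R) ^ numCycles (ρ * σ⁻¹) := by
  have hy : ∀ x : D → α, ∑ y : D → α, (∏ d, if y d = x (ρ d) then (1 : R) else 0) *
      ∏ d, (if y d = x (σ d) then 1 else 0) = if ∀ d, x ((ρ * σ⁻¹) d) = x d then 1 else 0 := by
    intro x
    simp only [Finset.prod_boole, Finset.mem_univ, forall_const, ← funext_iff, ite_mul, one_mul,
      zero_mul, Finset.sum_ite_eq', if_true]
    refine if_congr ?_ rfl rfl
    simp only [funext_iff, mul_apply]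
    exact ⟨fun h e => by simpa using h (σ⁻¹ e), fun h d => by simpa using h (σ d)⟩
  rw [← (Equiv.arrowProdEquivProdArrow D (fun _ => α) (fun _ => α)).symm.sum_comp,
    Fintype.sum_prod_type]
  refine (Finset.sum_congr rfl fun x _ => hy x).trans ?_
  rw [Finset.sum_boole, ← Fintype.card_subtype, ← Nat.card_eq_fintype_card,
    card_invariant_fun_eq_pow_numCycles]
  push_cast
  rfl

theorem Finset.prod_mul_apply_eq_prod {D M : Type*} [Fintype D] [DecidableEq D] [CommMonoid M]
    (σ : Perm D) {O : Finset D} (hO : ∀ d, d ∈ O ↔ σ d ∉ O) (f : D → M) :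
    ∏ d ∈ O, f d * f (σ d) = ∏ d, f d := by
  have hσO : O.map σ.toEmbedding = Oᶜ := by
    ext d
    rw [Finset.mem_map_equiv, Finset.mem_compl, hO, Equiv.apply_symm_apply]
  rw [Finset.prod_mul_distrib, ← Finset.prod_mul_prod_compl O f, ← hσO, Finset.prod_map]
  rfl

theorem fgl_eq_sum_bool (N : ℕ) (ℓ : Fin 3 → Fin N × Fin N) :
    fgl N (ℓ 0) (ℓ 1) (ℓ 2) = ∑ b : Bool, (if b then (1 : ℝ) else -1) *
      ∏ i, if (ℓ i).2 = (ℓ (i + if b then 1 else 2)).1 then 1 else 0 := by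
  simp only [fgl, Fintype.sum_bool, Fin.prod_univ_three, if_true, Bool.false_eq_true, if_false,
    Fin.reduceAdd, zero_add]
  ring

theorem prod_fgl_eq_sum_markings {V : Type*} [Fintype V] [DecidableEq V] (N : ℕ)
    (ℓ : V × Fin 3 → Fin N × Fin N) :
    ∏ v, fgl N (ℓ (v, 0)) (ℓ (v, 1)) (ℓ (v, 2)) = ∑ m : V → Bool,
      (∏ v, if m v then (1 : ℝ) else -1) * ∏ d, if (ℓ d).2 = (ℓ (rot m d)).1 then 1 else 0 := by
  rw [Finset.prod_congr rfl fun v _ => fgl_eq_sum_bool N fun i => ℓ (v, i), Fintype.prod_sum]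
  refine Finset.sum_congr rfl fun m _ => ?_
  rw [Finset.prod_mul_distrib, Fintype.prod_prod_type]
  rfl

theorem rot_sameCycle_add_one {V : Type*} (m : V → Bool) (v : V) (i : Fin 3) :
    (rot m).SameCycle (v, i) (v, i + 1) := by
  cases h : m v
  · exact ⟨-1, by simp [rot, h]; revert i; decide⟩
  · exact ⟨1, by simp [rot, h]⟩

theorem rot_sameCycle_of_fst_eq {V : Type*} (m : V → Bool) {x y : V × Fin 3} (h : x.1 = y.1) :
    (rot m).SameCycle x y := by
  obtain ⟨v, i⟩ := x
  obtain ⟨w, j⟩ := y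
  obtain rfl : v = w := h
  have hj : j = i ∨ j = i + 1 ∨ j = i + 1 + 1 := by revert i j; decide
  rcases hj with rfl | rfl | rfl
  · exact SameCycle.rfl
  · exact rot_sameCycle_add_one m v i
  · exact (rot_sameCycle_add_one m v i).trans (rot_sameCycle_add_one m v (i + 1))

namespace TrivGraph

variable {V : Type*} (G : TrivGraph V)

theorem σ_inv : G.σ⁻¹ = G.σ :=
  inv_eq_of_mul_eq_one_right (Equiv.ext G.invol)

theorem boundaryComponents_eq (m : V → Bool) :
    boundaryComponents G m = numCycles (rot m * G.σ) := rfl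

theorem prod_tgl_eq_prod [Fintype V] [DecidableEq V] {O : Finset (V × Fin 3)}
    (hO : ∀ d, d ∈ O ↔ G.σ d ∉ O) (N : ℕ) (ℓ : V × Fin 3 → Fin N × Fin N) :
    ∏ d ∈ O, tgl N (ℓ d) (ℓ (G.σ d)) = ∏ d, if (ℓ d).2 = (ℓ (G.σ d)).1 then (1 : ℝ) else 0 := by
  rw [← Finset.prod_mul_apply_eq_prod G.σ hO]
  refine Finset.prod_congr rfl fun d _ => ?_
  simp only [tgl, G.invol, eq_comm]

theorem sum_contraction_eq_pow_boundaryComponents [Fintype V] [DecidableEq V]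
    {O : Finset (V × Fin 3)} (hO : ∀ d, d ∈ O ↔ G.σ d ∉ O) (N : ℕ) (m : V → Bool) :
    ∑ ℓ : V × Fin 3 → Fin N × Fin N, (∏ d, if (ℓ d).2 = (ℓ (rot m d)).1 then (1 : ℝ) else 0) *
      ∏ d ∈ O, tgl N (ℓ d) (ℓ (G.σ d)) = (N : ℝ) ^ boundaryComponents G m := by
  simp only [G.prod_tgl_eq_prod hO]
  rw [sum_prod_ite_eq_pow_numCycles, G.σ_inv, Nat.card_eq_fintype_card, Fintype.card_fin,
    boundaryComponents_eq]

theorem two_mul_boundaryComponents_le [Fintype V] [DecidableEq V]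
    (hconn : ∀ d d' : V × Fin 3,
      Relation.ReflTransGen (fun x y => x.1 = y.1 ∨ G.σ x = y) d d')
    (m : V → Bool) : 2 * boundaryComponents G m ≤ Fintype.card V + 4 := by
  have hstep : ∀ x y : V × Fin 3, x.1 = y.1 ∨ G.σ x = y →
      (rot m).SameCycle x y ∨ G.σ.SameCycle x y := fun _ _ h =>
    h.imp (rot_sameCycle_of_fst_eq m) fun h => ⟨1, by simpa using h⟩
  have hEuler := numCycles_add_numCycles_add_numCycles_mul_le (rot m) G.σ fun x y =>
    Relation.ReflTransGen.mono hstep x y (hconn x y)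
  have hρ : Nat.card V ≤ numCycles (rot m) :=
    card_le_numCycles_of_invariant (φ := Prod.fst) (fun v => ⟨(v, 0), rfl⟩) fun _ => rfl
  have hσ := card_le_two_mul_numCycles G.invol
  simp only [Nat.card_eq_fintype_card, Fintype.card_prod, Fintype.card_fin] at hEuler hρ hσ
  rw [G.boundaryComponents_eq]
  omega

end TrivGraph

/-- For a connected trivalent graph `G` with `v` vertices,
`W_{gl(N)}(G) = Σ_M sign(M) · N^{b(M)}` where the sum is over all markings `M`
(signs `±` on the vertices), `sign(M)` is the product of the signs, and
`b(M) = v/2 + 2 − 2g(M)` is the number of boundary components of the thickening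
`T_M` (equivalently, `g(M)` is the genus of the closed surface `S_M`).
In particular `b(M) ≤ v/2 + 2`, so `W_{gl(N)}(G)` is a polynomial in `N` of
degree at most `v/2 + 2`. -/
theorem W_gl_eq_sum_over_markings
    (N : ℕ) {V : Type*} [Fintype V] [DecidableEq V]
    (G : TrivGraph V) (O : Finset (V × Fin 3))
    (hO : ∀ d, d ∈ O ↔ G.σ d ∉ O)
    (hconn : ∀ d d' : V × Fin 3,
      Relation.ReflTransGen (fun x y => x.1 = y.1 ∨ G.σ x = y) d d') :
    W G O (fgl N) (tgl N) =
      (∑ m : V → Bool,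
        (∏ v : V, if m v then (1 : ℝ) else -1) * (N : ℝ) ^ boundaryComponents G m) ∧
    ∀ m : V → Bool, 2 * boundaryComponents G m ≤ Fintype.card V + 4 := by
  refine ⟨?_, G.two_mul_boundaryComponents_le hconn⟩
  simp only [W, prod_fgl_eq_sum_markings, Finset.sum_mul]
  rw [Finset.sum_comm]
  simp only [mul_assoc, ← Finset.mul_sum, G.sum_contraction_eq_pow_boundaryComponents hO]
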